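/- Let n ≥ 2 and let F : Matrix (Fin n) (Fin n) ℝ → ℝ be a polynomial function of the matrix entries. Suppose F is invariant under orthogonal conjugation on traceless symmetric matrices: F(Bᵀ A B) = F(A) for every symmetric matrix A (Aᵀ = A) with tr(A) = 0 and every orthogonal matrix B (Bᵀ B = 1). Then there exists a multivariate polynomial Q over ℝ in n − 1 variables such that for every symmetric matrix A with tr(A) = 0 one has F(A) = Q(tr(A²), tr(A³), …, tr(Aⁿ)). -/

import Mathlib

/-!
Conjugating by an orthogonal eigenbasis turns a traceless symmetric `A` into `diagonal λ` with
`∑ λᵢ = 0`, so `F A = F (diagonal λ)`. The invariance only holds on traceless matrices, so we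
restrict `P` to diagonals of the centered vector `v - mean v`: this gives a polynomial in `v` that
agrees with `F (diagonal v)` on the hyperplane `∑ vᵢ = 0` and, by conjugation with permutation
matrices, is symmetric on all of `ℝⁿ`. By the fundamental theorem of symmetric polynomials and
Newton's identities it is a polynomial in the power sums `p₁, …, pₙ`; at `λ` these are
`p₁ = tr A = 0` and `pₖ = tr (A ^ k)`.
-/

open Matrix MvPolynomial

namespace MvPolynomial

theorem eval_aeval {σ τ R : Type*} [CommSemiring R] (f : σ → MvPolynomial τ R)
    (p : MvPolynomial σ R) (v : τ → R) :
    eval v (aeval f p) = eval (fun i => eval v (f i)) p := by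
  rw [aeval_eq_bind₁]
  exact eval₂Hom_bind₁ _ _ _ _

variable {σ K : Type*} [Fintype σ] [Field K] [CharZero K] {n : ℕ}

open Finset in
theorem esymm_mem_adjoin_psum (hn : Fintype.card σ ≤ n) (k : ℕ) :
    esymm σ K k ∈ Algebra.adjoin K (Set.range fun i : Fin n => psum σ K (i + 1)) := by
  set S := Algebra.adjoin K (Set.range fun i : Fin n => psum σ K (i + 1))
  induction k using Nat.strong_induction_on with
  | _ k ih =>
  rcases Nat.eq_zero_or_pos k with rfl | hk
  · simp [S.one_mem]
  rcases lt_or_ge (Fintype.card σ) k with hkσ | hkσ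
  · rw [esymm, powersetCard_eq_empty.mpr (by simpa using hkσ), sum_empty]
    exact S.zero_mem
  have hnewton : esymm σ K k = C (k : K)⁻¹ * ((-1) ^ (k + 1) *
      ∑ a ∈ antidiagonal k with a.1 < k, (-1) ^ a.1 * esymm σ K a.1 * psum σ K a.2) := by
    rw [← mul_esymm_eq_sum, ← mul_assoc, ← map_natCast C, ← C_mul,
      inv_mul_cancel₀ (by exact_mod_cast hk.ne'), C_1, one_mul]
  rw [hnewton]
  refine S.mul_mem (S.algebraMap_mem _) (S.mul_mem (S.pow_mem (S.neg_mem S.one_mem) _)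
    (S.sum_mem fun a ha => ?_))
  rw [mem_filter, HasAntidiagonal.mem_antidiagonal] at ha
  have hpsum : psum σ K a.2 ∈ S :=
    Algebra.subset_adjoin ⟨⟨a.2 - 1, by omega⟩, by simp only; congr; omega⟩
  exact S.mul_mem (S.mul_mem (S.pow_mem (S.neg_mem S.one_mem) _) (ih _ ha.2)) hpsum

theorem IsSymmetric.mem_adjoin_psum (hn : Fintype.card σ ≤ n) {p : MvPolynomial σ K}
    (hp : p.IsSymmetric) :
    p ∈ Algebra.adjoin K (Set.range fun i : Fin n => psum σ K (i + 1)) := by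
  obtain ⟨q, hq⟩ := esymmAlgHom_surjective K hn ⟨p, hp⟩
  have hesymm : p ∈ Algebra.adjoin K (Set.range fun i : Fin n => esymm σ K (i + 1)) := by
    rw [Algebra.adjoin_range_eq_range_aeval]
    exact ⟨q, (esymmAlgHom_apply q).symm.trans (congrArg Subtype.val hq)⟩
  exact Algebra.adjoin_le (Set.range_subset_iff.2 fun i => esymm_mem_adjoin_psum hn _) hesymm

end MvPolynomial

section Centering

variable {ι K : Type*} [Fintype ι] [Field K]

def centered (v : ι → K) : ι → K := fun i => v i - (Fintype.card ι : K)⁻¹ * ∑ j, v j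

theorem sum_centered [CharZero K] (v : ι → K) : ∑ i, centered v i = 0 := by
  rcases isEmpty_or_nonempty ι with hι | hι
  · simp
  simp [centered, Finset.sum_sub_distrib, Finset.card_univ]

theorem centered_eq_self {v : ι → K} (hv : ∑ i, v i = 0) : centered v = v := by
  ext i; simp [centered, hv]

theorem centered_comp_equiv (v : ι → K) (e : ι ≃ ι) :
    centered (v ∘ e) = centered v ∘ e := by
  ext i; simp [centered, Equiv.sum_comp e v]

variable [DecidableEq ι]

noncomputable def centeredDiagonalPoly (P : MvPolynomial (ι × ι) K) : MvPolynomial ι K :=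
  aeval (fun p : ι × ι =>
    if p.1 = p.2 then X p.1 - C (Fintype.card ι : K)⁻¹ * ∑ j, X j else 0) P

theorem eval_centeredDiagonalPoly (P : MvPolynomial (ι × ι) K) (v : ι → K) :
    eval v (centeredDiagonalPoly P) = eval (fun p => diagonal (centered v) p.1 p.2) P := by
  rw [centeredDiagonalPoly, eval_aeval]
  congr 2 with p
  by_cases h : p.1 = p.2 <;> simp [h, centered]

theorem isSymmetric_centeredDiagonalPoly [CharZero K] {P : MvPolynomial (ι × ι) K}
    (hP : ∀ (e : Equiv.Perm ι) (v : ι → K), ∑ i, v i = 0 →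
      eval (fun p => diagonal (v ∘ e) p.1 p.2) P = eval (fun p => diagonal v p.1 p.2) P) :
    (centeredDiagonalPoly P).IsSymmetric := fun e => MvPolynomial.funext fun v => by
  rw [eval_rename, eval_centeredDiagonalPoly, eval_centeredDiagonalPoly, centered_comp_equiv,
    hP e _ (sum_centered v)]

end Centering

section Matrices

variable {n : Type*} [Fintype n] [DecidableEq n]

theorem Matrix.transpose_permMatrix_mul_self {R : Type*} [NonAssocSemiring R]
    (σ : Equiv.Perm n) : (σ.permMatrix R)ᵀ * σ.permMatrix R = 1 := by
  rw [transpose_permMatrix, ← permMatrix_mul, mul_inv_cancel, permMatrix_one]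

theorem Matrix.transpose_permMatrix_mul_mul_permMatrix {R : Type*} [NonAssocSemiring R]
    (σ : Equiv.Perm n) (A : Matrix n n R) :
    (σ.permMatrix R)ᵀ * A * σ.permMatrix R = A.submatrix σ.symm σ.symm := by
  rw [transpose_permMatrix, Equiv.Perm.permMatrix, Equiv.Perm.permMatrix,
    PEquiv.toMatrix_toPEquiv_mul]
  ext i j
  simp [Matrix.mul_apply, PEquiv.toMatrix_apply, ← Equiv.eq_symm_apply]

theorem Matrix.IsHermitian.trace_pow {𝕜 : Type*} [RCLike 𝕜] {A : Matrix n n 𝕜}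
    (hA : A.IsHermitian) (k : ℕ) : (A ^ k).trace = ∑ i, (hA.eigenvalues i : 𝕜) ^ k := by
  conv_lhs => rw [hA.spectral_theorem, ← map_pow, Unitary.conjStarAlgAut_apply, trace_mul_cycle,
    Unitary.coe_star_mul_self, Matrix.one_mul, diagonal_pow, trace_diagonal]
  rfl

theorem Matrix.IsHermitian.transpose_eigenvectorUnitary_mul_self {A : Matrix n n ℝ}
    (hA : A.IsHermitian) :
    (hA.eigenvectorUnitary : Matrix n n ℝ)ᵀ * hA.eigenvectorUnitary = 1 := by
  rw [← conjTranspose_eq_transpose_of_trivial, ← star_eq_conjTranspose,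
    Unitary.coe_star_mul_self]

theorem Matrix.IsHermitian.transpose_eigenvectorUnitary_mul_mul {A : Matrix n n ℝ}
    (hA : A.IsHermitian) :
    (hA.eigenvectorUnitary : Matrix n n ℝ)ᵀ * A * hA.eigenvectorUnitary =
      diagonal hA.eigenvalues := by
  have h := hA.conjStarAlgAut_star_eigenvectorUnitary
  rwa [Unitary.conjStarAlgAut_star_apply, star_eq_conjTranspose,
    conjTranspose_eq_transpose_of_trivial] at h

end Matrices

theorem stmt_5_general (n : ℕ) (F : Matrix (Fin n) (Fin n) ℝ → ℝ)
    (P : MvPolynomial (Fin n × Fin n) ℝ)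
    (hF : ∀ A : Matrix (Fin n) (Fin n) ℝ,
      F A = MvPolynomial.eval (fun p : Fin n × Fin n => A p.1 p.2) P)
    (hinv : ∀ A B : Matrix (Fin n) (Fin n) ℝ, Aᵀ = A → A.trace = 0 → Bᵀ * B = 1 →
      F (Bᵀ * A * B) = F A) :
    ∃ Q : MvPolynomial (Fin (n - 1)) ℝ, ∀ A : Matrix (Fin n) (Fin n) ℝ,
      Aᵀ = A → A.trace = 0 →
      F A = MvPolynomial.eval (fun i : Fin (n - 1) => (A ^ ((i : ℕ) + 2)).trace) Q := by
  have hP : ∀ (e : Equiv.Perm (Fin n)) (v : Fin n → ℝ), ∑ i, v i = 0 →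
      eval (fun p => diagonal (v ∘ e) p.1 p.2) P = eval (fun p => diagonal v p.1 p.2) P := by
    intro e v hv
    rw [← hF, ← hF, ← e.symm_symm, ← submatrix_diagonal_equiv,
      ← transpose_permMatrix_mul_mul_permMatrix]
    exact hinv _ _ (diagonal_transpose v) (by rwa [trace_diagonal])
      (transpose_permMatrix_mul_self _)
  obtain ⟨R, hR⟩ : ∃ R : MvPolynomial (Fin n) ℝ,
      aeval (fun i : Fin n => psum (Fin n) ℝ (i + 1)) R = centeredDiagonalPoly P := by
    rw [← AlgHom.mem_range, ← Algebra.adjoin_range_eq_range_aeval]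
    exact (isSymmetric_centeredDiagonalPoly hP).mem_adjoin_psum (Fintype.card_fin n).le
  -- `p₁ ↦ 0` and `pₖ ↦` the variable standing for `tr (A ^ k)`
  refine ⟨aeval (fun i : Fin n => if h : (i : ℕ) = 0 then 0 else X ⟨i - 1, by omega⟩) R,
    fun A hA htr => ?_⟩
  have hAh : A.IsHermitian := by rwa [Matrix.IsHermitian, conjTranspose_eq_transpose_of_trivial]
  have hsum : ∑ i, hAh.eigenvalues i = 0 := by simpa [htr] using (hAh.trace_pow 1).symm
  calc F A = F (diagonal hAh.eigenvalues) := by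
        rw [← hAh.transpose_eigenvectorUnitary_mul_mul]
        exact (hinv _ _ hA htr hAh.transpose_eigenvectorUnitary_mul_self).symm
    _ = eval hAh.eigenvalues (centeredDiagonalPoly P) := by
        rw [eval_centeredDiagonalPoly, centered_eq_self hsum, hF]
    _ = _ := by
        rw [← hR, eval_aeval, eval_aeval]
        congr 2 with i
        by_cases hi : (i : ℕ) = 0
        · simp [hi, psum, hsum]
        · have hexp : (i : ℕ) - 1 + 2 = i + 1 := by omega
          simp [hi, psum, hAh.trace_pow, hexp]

/-- a polynomial function of matrix entries invariant under orthogonal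
conjugation on traceless symmetric matrices is a polynomial in
`tr(A²), …, tr(Aⁿ)`. -/
theorem stmt_5 (n : ℕ) (hn : 2 ≤ n) (F : Matrix (Fin n) (Fin n) ℝ → ℝ)
    (P : MvPolynomial (Fin n × Fin n) ℝ)
    (hF : ∀ A : Matrix (Fin n) (Fin n) ℝ,
      F A = MvPolynomial.eval (fun p : Fin n × Fin n => A p.1 p.2) P)
    (hinv : ∀ A B : Matrix (Fin n) (Fin n) ℝ, Aᵀ = A → A.trace = 0 → Bᵀ * B = 1 →
      F (Bᵀ * A * B) = F A) :
    ∃ Q : MvPolynomial (Fin (n - 1)) ℝ, ∀ A : Matrix (Fin n) (Fin n) ℝ,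
      Aᵀ = A → A.trace = 0 →
      F A = MvPolynomial.eval (fun i : Fin (n - 1) => (A ^ ((i : ℕ) + 2)).trace) Q :=
  stmt_5_general n F P hF hinv
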